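/- Define B : [0,1] → ℝ by B(x) = (1 − x)(2x + 1)/(1 + x). Then B(0) = 1, B(1) = 0, and for every x ∈ (0,1), (x − x³) · B''(x) − 2 · B'(x) − (4x/(1 − x²)) · B(x) = 0. -/

import Mathlib

/-- The explicit radial solution of the hemisphere Jacobi ODE for `m* = 1`, `k = 2`. -/
noncomputable def B : ℝ → ℝ := fun x => (1 - x) * (2 * x + 1) / (1 + x)

/-
Away from `x = -1`, polynomial division gives `B x = 3 - 2x - 2/(1 + x)`, so
`B' = -2 + 2/(1 + x)²` and `B'' = -4/(1 + x)³`; substituting these into the equation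
and clearing the denominators `1 + x` and `1 - x` leaves a polynomial identity.
-/

open Filter Topology

lemma hasDerivAt_B {x : ℝ} (hx : 1 + x ≠ 0) : HasDerivAt B (-2 + 2 / (1 + x) ^ 2) x := by
  have hnum : HasDerivAt (fun y : ℝ => (1 - y) * (2 * y + 1))
      (-1 * (2 * x + 1) + (1 - x) * (2 * 1)) x :=
    ((hasDerivAt_id' x).const_sub 1).mul (((hasDerivAt_id' x).const_mul 2).add_const 1)
  refine (hnum.div ((hasDerivAt_id' x).const_add 1) hx).congr_deriv ?_
  field_simp
  ring

lemma deriv_B_eventuallyEq {x : ℝ} (hx : 1 + x ≠ 0) :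
    deriv B =ᶠ[𝓝 x] fun y => -2 + 2 / (1 + y) ^ 2 := by
  filter_upwards [(continuous_const.add continuous_id).continuousAt.eventually_ne hx]
    with y hy using (hasDerivAt_B hy).deriv

lemma deriv_deriv_B {x : ℝ} (hx : 1 + x ≠ 0) : deriv (deriv B) x = -4 / (1 + x) ^ 3 := by
  have hsq : HasDerivAt (fun y : ℝ => (1 + y) ^ 2) (2 * (1 + x) ^ 1 * 1) x :=
    ((hasDerivAt_id' x).const_add 1).pow 2
  rw [(deriv_B_eventuallyEq hx).deriv_eq]
  refine (((hasDerivAt_const x (2 : ℝ)).div hsq (pow_ne_zero 2 hx)).const_add (-2)).deriv.trans ?_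
  field_simp
  ring

lemma jacobi_ode_B {x : ℝ} (hx₁ : 1 - x ≠ 0) (hx₂ : 1 + x ≠ 0) :
    (x - x ^ 3) * deriv (deriv B) x - 2 * deriv B x - (4 * x / (1 - x ^ 2)) * B x = 0 := by
  have hx : 1 - x ^ 2 ≠ 0 := by
    rw [show 1 - x ^ 2 = (1 - x) * (1 + x) by ring]
    exact mul_ne_zero hx₁ hx₂
  rw [deriv_deriv_B hx₂, (hasDerivAt_B hx₂).deriv, B]
  field_simp
  ring

/-- `B(x) = (1-x)(2x+1)/(1+x)` satisfies `B(0) = 1`, `B(1) = 0`, and the ODE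
`(x - x³) B'' - 2 B' - (4x/(1-x²)) B = 0` on `(0,1)`. -/
theorem jacobi_ode_solution_dim_two :
    B 0 = 1 ∧ B 1 = 0 ∧ ∀ x ∈ Set.Ioo (0 : ℝ) 1,
      (x - x ^ 3) * deriv (deriv B) x - 2 * deriv B x - (4 * x / (1 - x ^ 2)) * B x = 0 := by
  refine ⟨by norm_num [B], by norm_num [B], fun x hx => ?_⟩
  exact jacobi_ode_B (by linarith [hx.2]) (by linarith [hx.1])
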